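/- arXiv:1606.04924 — 3 statements merged into one kernel-verified Lean document; each statement's English description precedes it below -/
import Mathlib

section
/- Let d ≥ 1 and α ∈ [0,1). Then there exists r₀ > 0 such that for every r ≥ r₀ the family (B_k^r)_{k ∈ ℤ^d∖{0}} is an admissible covering of ℝ^d: ⋃_{k ∈ ℤ^d∖{0}} B_k^r = ℝ^d, and sup_{k ∈ ℤ^d∖{0}} #{l ∈ ℤ^d∖{0} : B_l^r ∩ B_k^r ≠ ∅} < ∞. -/
open MeasureTheory
open scoped ENNReal

/-- The integer lattice point `k ∈ ℤ^d` viewed as an element of `ℝ^d`. -/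
noncomputable def intVec {d : ℕ} (k : Fin d → ℤ) : EuclideanSpace ℝ (Fin d) :=
  (EuclideanSpace.equiv (Fin d) ℝ).symm (fun i => (k i : ℝ))

/-- The ball `B_k^r = {ξ ∈ ℝ^d : |ξ - |k|^{α₀} k| < r |k|^{α₀}}` with `α₀ = α/(1-α)`, a member of
the standard `α`-covering of the frequency space `ℝ^d`. -/
noncomputable def alphaBall (d : ℕ) (α r : ℝ) (k : Fin d → ℤ) :
    Set (EuclideanSpace ℝ (Fin d)) :=
  Metric.ball ((‖intVec k‖ ^ (α / (1 - α))) • intVec k) (r * ‖intVec k‖ ^ (α / (1 - α)))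

/-! The centre of `B_k^r` is `φ(k)` for the radial power map `φ(x) = ‖x‖^β x`, `β = α₀`, a
bijection of `ℝ^d` with `‖φ x - φ y‖ ≍ ‖x‖^β ‖x - y‖` whenever `‖x‖ ≍ ‖y‖`. Covering: for
`ξ = φ(x)` pick a nonzero lattice point `k` within distance `√d/2 + 1` of `x`; then
`‖ξ - φ k‖ ≲ ‖k‖^β`. Overlap: if `B_l^r` meets `B_k^r`, comparing norms of the centres gives
`‖l‖ ≍ ‖k‖`, and then the lower bound for `φ` gives `‖l - k‖ ≤ 2r(1+2r)^β`, so only boundedly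
many `l` occur. -/

open scoped RealInnerProductSpace

section Scalar

variable {β a m : ℝ}

theorem rpow_add_one_sub_rpow_add_one_le (hβ : 0 ≤ β) (hm : 0 ≤ m) (hma : m ≤ a) :
    a ^ (β + 1) - m ^ (β + 1) ≤ (β + 1) * a ^ β * (a - m) := by
  rcases hma.eq_or_lt with rfl | hlt
  · simp
  have hslope := (convexOn_rpow (p := β + 1) (by linarith)).slope_le_of_hasDerivAt
    (Set.mem_Ici.2 hm) (Set.mem_Ici.2 (hm.trans hma)) hlt
    (Real.hasDerivAt_rpow_const (Or.inr (by linarith)))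
  rw [slope_def_field, div_le_iff₀ (sub_pos.2 hlt), add_sub_cancel_right] at hslope
  linarith

theorem rpow_sub_rpow_mul_le (hβ : 0 ≤ β) (hm : 0 ≤ m) (hma : m ≤ a) :
    (a ^ β - m ^ β) * m ≤ β * a ^ β * (a - m) := by
  have h := rpow_add_one_sub_rpow_add_one_le hβ hm hma
  have hne : β + 1 ≠ 0 := by linarith
  rw [Real.rpow_add_one' (hm.trans hma) hne, Real.rpow_add_one' hm hne] at h
  linarith

end Scalar

section RadialPow

variable {E : Type*} [NormedAddCommGroup E] [InnerProductSpace ℝ E] {β : ℝ}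

noncomputable def radialPow (β : ℝ) (x : E) : E := ‖x‖ ^ β • x

theorem norm_radialPow (x : E) : ‖radialPow β x‖ = ‖x‖ ^ β * ‖x‖ := by
  rw [radialPow, norm_smul, Real.norm_of_nonneg (by positivity)]

theorem radialPow_surjective (hβ : β + 1 ≠ 0) : Function.Surjective (radialPow β : E → E) := by
  intro ξ
  rcases eq_or_ne ξ 0 with rfl | hξ
  · exact ⟨0, by simp [radialPow]⟩
  have hn : 0 < ‖ξ‖ := norm_pos_iff.2 hξ
  refine ⟨‖ξ‖ ^ ((β + 1)⁻¹ - 1) • ξ, ?_⟩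
  have hnorm : ‖‖ξ‖ ^ ((β + 1)⁻¹ - 1) • ξ‖ = ‖ξ‖ ^ (β + 1)⁻¹ := by
    rw [norm_smul, Real.norm_of_nonneg (by positivity), ← Real.rpow_add_one hn.ne']
    ring_nf
  rw [radialPow, hnorm, smul_smul, ← Real.rpow_mul hn.le, ← Real.rpow_add hn]
  rw [show (β + 1)⁻¹ * β + ((β + 1)⁻¹ - 1) = 0 by field_simp; ring, Real.rpow_zero, one_smul]

theorem norm_radialPow_sub_le_of_norm_le (hβ : 0 ≤ β) {x y : E} (h : ‖y‖ ≤ ‖x‖) :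
    ‖radialPow β x - radialPow β y‖ ≤ (1 + β) * ‖x‖ ^ β * ‖x - y‖ := by
  have hsplit : radialPow β x - radialPow β y = ‖x‖ ^ β • (x - y) + (‖x‖ ^ β - ‖y‖ ^ β) • y := by
    simp only [radialPow, smul_sub, sub_smul]; abel
  have hpow : ‖y‖ ^ β ≤ ‖x‖ ^ β := by gcongr
  have hmvt := rpow_sub_rpow_mul_le hβ (norm_nonneg y) h
  have hgap : ‖x‖ - ‖y‖ ≤ ‖x - y‖ := norm_sub_norm_le x y
  calc ‖radialPow β x - radialPow β y‖
      ≤ ‖x‖ ^ β * ‖x - y‖ + (‖x‖ ^ β - ‖y‖ ^ β) * ‖y‖ := by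
        rw [hsplit]
        refine (norm_add_le _ _).trans_eq ?_
        rw [norm_smul, norm_smul, Real.norm_of_nonneg (by positivity),
          Real.norm_of_nonneg (sub_nonneg.2 hpow)]
    _ ≤ (1 + β) * ‖x‖ ^ β * ‖x - y‖ := by
        nlinarith [mul_le_mul_of_nonneg_left hgap (by positivity : 0 ≤ β * ‖x‖ ^ β)]

theorem norm_radialPow_sub_le (hβ : 0 ≤ β) (x y : E) :
    ‖radialPow β x - radialPow β y‖ ≤ (1 + β) * max ‖x‖ ‖y‖ ^ β * ‖x - y‖ := by
  rcases le_total ‖y‖ ‖x‖ with h | h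
  · rw [max_eq_left h]
    exact norm_radialPow_sub_le_of_norm_le hβ h
  · rw [max_eq_right h, norm_sub_rev, norm_sub_rev x]
    exact norm_radialPow_sub_le_of_norm_le hβ h

theorem rpow_mul_norm_sub_le_norm_radialPow_sub (hβ : 0 ≤ β) {x y : E} (h : ‖y‖ ≤ ‖x‖) :
    ‖y‖ ^ β * ‖x - y‖ ≤ ‖radialPow β x - radialPow β y‖ := by
  set P := ‖x‖ ^ β
  set Q := ‖y‖ ^ β
  have hQ : 0 ≤ Q := by positivity
  have hQP : 0 ≤ P - Q := sub_nonneg.2 (Real.rpow_le_rpow (norm_nonneg y) h hβ)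
  have hsplit : radialPow β x - radialPow β y = Q • (x - y) + (P - Q) • x := by
    simp only [radialPow, smul_sub, sub_smul]; abel
  -- the cross term in `‖Q • (x - y) + (P - Q) • x‖²` is nonnegative
  have hinner : 0 ≤ ⟪x - y, x⟫ := by
    rw [inner_sub_left, real_inner_self_eq_norm_mul_norm]
    nlinarith [real_inner_le_norm y x, norm_nonneg x]
  have hsq : (Q * ‖x - y‖) ^ 2 ≤ ‖radialPow β x - radialPow β y‖ ^ 2 := by
    rw [hsplit, norm_add_sq_real, norm_smul, norm_smul, Real.norm_of_nonneg hQ,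
      Real.norm_of_nonneg hQP, real_inner_smul_left, real_inner_smul_right]
    nlinarith [mul_nonneg (mul_nonneg hQ hQP) hinner, sq_nonneg ((P - Q) * ‖x‖)]
  exact pow_le_pow_iff_left₀ (by positivity) (norm_nonneg _) two_ne_zero |>.1 hsq

theorem rpow_mul_sub_norm_le_norm_radialPow_sub (hβ : 0 ≤ β) {x y : E} (h : ‖y‖ ≤ ‖x‖) :
    ‖x‖ ^ β * (‖x‖ - ‖y‖) ≤ ‖radialPow β x - radialPow β y‖ := by
  have hpow : ‖y‖ ^ β * ‖y‖ ≤ ‖x‖ ^ β * ‖y‖ :=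
    mul_le_mul_of_nonneg_right (Real.rpow_le_rpow (norm_nonneg y) h hβ) (norm_nonneg y)
  calc ‖x‖ ^ β * (‖x‖ - ‖y‖) ≤ ‖radialPow β x‖ - ‖radialPow β y‖ := by
        rw [norm_radialPow, norm_radialPow]; linarith
    _ ≤ ‖radialPow β x - radialPow β y‖ := norm_sub_norm_le _ _

theorem radialPow_mem_ball (hβ : 0 ≤ β) {x y : E} {C r : ℝ} (hy : 1 ≤ ‖y‖) (hxy : ‖x - y‖ ≤ C)
    (hr : (1 + β) * (1 + C) ^ β * C < r) :
    radialPow β x ∈ Metric.ball (radialPow β y) (r * ‖y‖ ^ β) := by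
  have hC : 0 ≤ C := (norm_nonneg _).trans hxy
  have hmax : max ‖x‖ ‖y‖ ≤ (1 + C) * ‖y‖ := by
    refine max_le ?_ (by nlinarith)
    nlinarith [norm_le_norm_add_norm_sub' x y]
  have hpow : max ‖x‖ ‖y‖ ^ β ≤ (1 + C) ^ β * ‖y‖ ^ β := by
    rw [← Real.mul_rpow (by linarith) (norm_nonneg y)]
    exact Real.rpow_le_rpow (by positivity) hmax hβ
  have hy1 : 1 ≤ ‖y‖ ^ β := Real.one_le_rpow hy hβ
  rw [Metric.mem_ball, dist_eq_norm]
  calc ‖radialPow β x - radialPow β y‖ ≤ (1 + β) * max ‖x‖ ‖y‖ ^ β * ‖x - y‖ :=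
        norm_radialPow_sub_le hβ x y
    _ ≤ (1 + β) * ((1 + C) ^ β * ‖y‖ ^ β) * C := by gcongr
    _ = (1 + β) * (1 + C) ^ β * C * ‖y‖ ^ β := by ring
    _ < r * ‖y‖ ^ β := by gcongr

theorem norm_sub_le_of_ball_radialPow_inter_nonempty (hβ : 0 ≤ β) {x y : E} {r : ℝ}
    (hx : 1 ≤ ‖x‖) (hy : 1 ≤ ‖y‖)
    (h : (Metric.ball (radialPow β x) (r * ‖x‖ ^ β) ∩
      Metric.ball (radialPow β y) (r * ‖y‖ ^ β)).Nonempty) :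
    ‖x - y‖ ≤ 2 * r * (1 + 2 * r) ^ β := by
  wlog hyx : ‖y‖ ≤ ‖x‖ generalizing x y
  · rw [norm_sub_rev]
    exact this hy hx (Set.inter_comm _ _ ▸ h) (le_of_not_ge hyx)
  obtain ⟨ξ, hξx, hξy⟩ := h
  rw [Metric.mem_ball] at hξx hξy
  have hxβ : 0 < ‖x‖ ^ β := by positivity
  have hyβ : 0 < ‖y‖ ^ β := by positivity
  have hr : 0 < r := pos_of_mul_pos_left (dist_nonneg.trans_lt hξx) hxβ.le
  have hcentres : ‖radialPow β x - radialPow β y‖ < 2 * r * ‖x‖ ^ β := by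
    rw [← dist_eq_norm]
    calc dist (radialPow β x) (radialPow β y) ≤ dist ξ (radialPow β x) + dist ξ (radialPow β y) :=
          dist_triangle_left _ _ _
      _ < r * ‖x‖ ^ β + r * ‖y‖ ^ β := add_lt_add hξx hξy
      _ ≤ 2 * r * ‖x‖ ^ β := by nlinarith [Real.rpow_le_rpow (norm_nonneg y) hyx hβ]
  have hcomparable : ‖x‖ ≤ (1 + 2 * r) * ‖y‖ := by
    have hgap : ‖x‖ - ‖y‖ < 2 * r := lt_of_mul_lt_mul_left (by
      linarith [(rpow_mul_sub_norm_le_norm_radialPow_sub hβ hyx).trans_lt hcentres]) hxβ.le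
    nlinarith
  have hpow : ‖x‖ ^ β ≤ (1 + 2 * r) ^ β * ‖y‖ ^ β := by
    rw [← Real.mul_rpow (by linarith) (norm_nonneg y)]
    exact Real.rpow_le_rpow (norm_nonneg x) hcomparable hβ
  have hlower := rpow_mul_norm_sub_le_norm_radialPow_sub hβ hyx
  refine le_of_mul_le_mul_left ?_ hyβ
  nlinarith

end RadialPow

section Lattice

variable {d : ℕ}

theorem intVec_apply (k : Fin d → ℤ) (i : Fin d) : intVec k i = k i := rfl

theorem intVec_sub (k l : Fin d → ℤ) : intVec (k - l) = intVec k - intVec l := by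
  ext i
  simp [intVec_apply]

theorem one_le_norm_intVec {k : Fin d → ℤ} (hk : k ≠ 0) : 1 ≤ ‖intVec k‖ := by
  obtain ⟨i, hi⟩ := Function.ne_iff.1 hk
  calc (1 : ℝ) ≤ |(k i : ℝ)| := by exact_mod_cast Int.one_le_abs hi
    _ ≤ ‖intVec k‖ := PiLp.norm_apply_le (intVec k) i

theorem EuclideanSpace.norm_le_sqrt_card_mul {x : EuclideanSpace ℝ (Fin d)} {c : ℝ}
    (hc : 0 ≤ c) (h : ∀ i, |x i| ≤ c) : ‖x‖ ≤ √d * c := by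
  rw [EuclideanSpace.norm_eq, ← Real.sqrt_sq hc, ← Real.sqrt_mul (Nat.cast_nonneg d)]
  gcongr
  calc ∑ i, ‖x i‖ ^ 2 ≤ ∑ _i : Fin d, c ^ 2 := by
        gcongr with i
        rw [Real.norm_eq_abs]
        exact h i
    _ = d * c ^ 2 := by simp

theorem exists_ne_zero_norm_sub_intVec_le (hd : 0 < d) (x : EuclideanSpace ℝ (Fin d)) :
    ∃ k ≠ 0, ‖x - intVec k‖ ≤ √d / 2 + 1 := by
  set k : Fin d → ℤ := fun i => round (x i)
  have hround : ‖x - intVec k‖ ≤ √d / 2 := by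
    rw [div_eq_mul_one_div]
    exact EuclideanSpace.norm_le_sqrt_card_mul (by norm_num) fun i => abs_sub_round (x i)
  by_cases hk : k = 0
  · set i₀ : Fin d := ⟨0, hd⟩
    have hunit : intVec (Pi.single i₀ 1) = EuclideanSpace.single i₀ 1 := by
      ext i
      by_cases hi : i = i₀ <;> simp [intVec_apply, hi]
    rw [hk, show intVec (0 : Fin d → ℤ) = 0 by ext; simp [intVec_apply], sub_zero] at hround
    refine ⟨Pi.single i₀ 1, by simp, ?_⟩
    calc ‖x - intVec (Pi.single i₀ 1)‖ ≤ ‖x‖ + 1 := (norm_sub_le _ _).trans_eq (by simp [hunit])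
      _ ≤ √d / 2 + 1 := by linarith
  · exact ⟨k, hk, hround.trans (by linarith)⟩

theorem finite_setOf_norm_intVec_le (R : ℝ) : {l : Fin d → ℤ | ‖intVec l‖ ≤ R}.Finite := by
  refine (Set.Finite.pi (t := fun _ => Set.Icc (-⌈R⌉) ⌈R⌉) fun _ => Set.finite_Icc _ _).subset ?_
  intro l hl i _
  have hcoord : |(l i : ℝ)| ≤ ⌈R⌉ :=
    ((PiLp.norm_apply_le (intVec l) i).trans hl).trans (Int.le_ceil R)
  exact abs_le.1 (by exact_mod_cast hcoord)

theorem finite_and_ncard_le_of_forall_norm_intVec_sub_le {S : Set (Fin d → ℤ)} {k : Fin d → ℤ}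
    {R : ℝ} (h : ∀ l ∈ S, ‖intVec l - intVec k‖ ≤ R) :
    S.Finite ∧ S.ncard ≤ {l : Fin d → ℤ | ‖intVec l‖ ≤ R}.ncard := by
  have hfin := finite_setOf_norm_intVec_le (d := d) R
  have hsub : S ⊆ (· + k) '' {l | ‖intVec l‖ ≤ R} := fun l hl =>
    ⟨l - k, by simpa [intVec_sub] using h l hl, sub_add_cancel l k⟩
  exact ⟨(hfin.image _).subset hsub,
    (Set.ncard_le_ncard hsub (hfin.image _)).trans (Set.ncard_image_le hfin)⟩

end Lattice

/-- For `d ≥ 1` and `α ∈ [0,1)`, there is `r₀ > 0` such that for every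
`r ≥ r₀` the family `(B_k^r)_{k ∈ ℤ^d∖{0}}` is an admissible covering of `ℝ^d`: it covers `ℝ^d`
and has uniformly bounded overlap. -/
theorem alpha_covering_admissible
    {d : ℕ} (hd : 1 ≤ d) (α : ℝ) (hα0 : 0 ≤ α) (hα1 : α < 1) :
    ∃ r₀ : ℝ, 0 < r₀ ∧ ∀ r : ℝ, r₀ ≤ r →
      (⋃ k ∈ {k : Fin d → ℤ | k ≠ 0}, alphaBall d α r k) = Set.univ ∧
      ∃ N : ℕ, ∀ k : Fin d → ℤ, k ≠ 0 →
        {l : Fin d → ℤ | l ≠ 0 ∧ (alphaBall d α r l ∩ alphaBall d α r k).Nonempty}.Finite ∧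
        {l : Fin d → ℤ | l ≠ 0 ∧ (alphaBall d α r l ∩ alphaBall d α r k).Nonempty}.ncard ≤ N := by
  set β := α / (1 - α)
  have hβ : 0 ≤ β := div_nonneg hα0 (sub_nonneg.2 hα1.le)
  set C := √d / 2 + 1
  refine ⟨(1 + β) * (1 + C) ^ β * C + 1, by positivity, fun r hr => ⟨?_, ?_⟩⟩
  · refine Set.eq_univ_of_forall fun ξ => ?_
    obtain ⟨x, rfl⟩ :=
      radialPow_surjective (β := β) (E := EuclideanSpace ℝ (Fin d)) (by linarith) ξ
    obtain ⟨k, hk, hxk⟩ := exists_ne_zero_norm_sub_intVec_le hd x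
    exact Set.mem_biUnion hk
      (radialPow_mem_ball (C := C) hβ (one_le_norm_intVec hk) hxk (by linarith))
  · refine ⟨_, fun k hk => finite_and_ncard_le_of_forall_norm_intVec_sub_le (k := k)
      (R := 2 * r * (1 + 2 * r) ^ β) ?_⟩
    rintro l ⟨hl, hlk⟩
    exact norm_sub_le_of_ball_radialPow_inter_nonempty hβ
      (one_le_norm_intVec hl) (one_le_norm_intVec hk) hlk
end

section
/- Let d ≥ 1, α ∈ [0,1), r > 0 and γ ∈ ℝ. Then the weight w^{(γ)} = ((1+|k|)^γ)_{k∈ℤ^d∖{0}} is moderate with respect to the covering (B_k^r)_{k∈ℤ^d∖{0}}: there is a constant C ≥ 1 such that for all k, l ∈ ℤ^d∖{0} with B_k^r ∩ B_l^r ≠ ∅, one has (1+|k|)^γ ≤ C·(1+|l|)^γ. -/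
open MeasureTheory
open scoped ENNReal

/-!
The centre of `B_k^r` has norm `‖k‖^{α₀} ‖k‖`, so a common point of `B_k^r` and `B_l^r` gives
`‖k‖^{α₀} ‖k‖ - ‖l‖^{α₀} ‖l‖ ≤ r (‖k‖^{α₀} + ‖l‖^{α₀})`. If `‖k‖ > ‖l‖`, the left side is at
least `‖k‖^{α₀} (‖k‖ - ‖l‖)` and the right side at most `2 r ‖k‖^{α₀}`, so `‖k‖ ≤ ‖l‖ + 2r`.
Hence `1 + ‖k‖` and `1 + ‖l‖` agree up to the factor `1 + 2r`, and the weights up to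
`(1 + 2r)^{|γ|}`.
-/

open Metric

lemma le_add_two_mul_of_rpow_mul_sub_rpow_mul_le {r t A B : ℝ} (hr : 0 ≤ r) (ht : 0 ≤ t)
    (hB : 0 ≤ B) (h : A ^ t * A - B ^ t * B ≤ r * (A ^ t + B ^ t)) : A ≤ B + 2 * r := by
  rcases le_or_gt A B with hAB | hAB
  · linarith
  have hBA : B ^ t ≤ A ^ t := Real.rpow_le_rpow hB hAB.le ht
  have hApos : 0 < A ^ t := Real.rpow_pos_of_pos (hB.trans_lt hAB) t
  have hgap : A ^ t * (A - B) ≤ A ^ t * (2 * r) := by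
    calc A ^ t * (A - B) ≤ A ^ t * A - B ^ t * B := by nlinarith
      _ ≤ r * (A ^ t + B ^ t) := h
      _ ≤ A ^ t * (2 * r) := by nlinarith
  linarith [le_of_mul_le_mul_left hgap hApos]

lemma norm_le_norm_add_two_mul_of_ball_inter_ball_nonempty {E : Type*}
    [SeminormedAddCommGroup E] [NormedSpace ℝ E] {r t : ℝ} (ht : 0 ≤ t) {x y : E}
    (h : (ball (‖x‖ ^ t • x) (r * ‖x‖ ^ t) ∩ ball (‖y‖ ^ t • y) (r * ‖y‖ ^ t)).Nonempty) :
    ‖x‖ ≤ ‖y‖ + 2 * r := by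
  have hxt : 0 ≤ ‖x‖ ^ t := Real.rpow_nonneg (norm_nonneg x) t
  have hyt : 0 ≤ ‖y‖ ^ t := Real.rpow_nonneg (norm_nonneg y) t
  have hr : 0 < r := pos_of_mul_pos_left (nonempty_ball.mp h.left) hxt
  have hcentres := dist_lt_add_of_nonempty_ball_inter_ball h
  have hnorms := norm_sub_norm_le (‖x‖ ^ t • x) (‖y‖ ^ t • y)
  rw [← dist_eq_norm, norm_smul, norm_smul, Real.norm_of_nonneg hxt,
    Real.norm_of_nonneg hyt] at hnorms
  exact le_add_two_mul_of_rpow_mul_sub_rpow_mul_le hr.le ht (norm_nonneg y) (by linarith)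

lemma one_add_le_mul_one_add_of_le_add {a b c : ℝ} (hb : 0 ≤ b) (hc : 0 ≤ c)
    (h : a ≤ b + c) : 1 + a ≤ (1 + c) * (1 + b) := by
  nlinarith

lemma rpow_le_rpow_abs_mul_rpow_of_le_mul {x y M : ℝ} (hx : 0 < x) (hy : 0 < y) (hM : 0 < M)
    (hxy : x ≤ M * y) (hyx : y ≤ M * x) (γ : ℝ) : x ^ γ ≤ M ^ |γ| * y ^ γ := by
  rcases le_or_gt 0 γ with hγ | hγ
  · rw [abs_of_nonneg hγ, ← Real.mul_rpow hM.le hy.le]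
    exact Real.rpow_le_rpow hx.le hxy hγ
  · rw [abs_of_neg hγ, Real.rpow_neg hM.le, le_inv_mul_iff₀ (Real.rpow_pos_of_pos hM γ),
      ← Real.mul_rpow hM.le hx.le]
    exact Real.rpow_le_rpow_of_nonpos hy hyx hγ.le

theorem alpha_covering_weight_moderate_general
    {d : ℕ} (α : ℝ) (hα0 : 0 ≤ α) (hα1 : α < 1) (r : ℝ) (hr : 0 < r) (γ : ℝ) :
    ∃ C : ℝ, 1 ≤ C ∧ ∀ k l : Fin d → ℤ, k ≠ 0 → l ≠ 0 →
      (alphaBall d α r k ∩ alphaBall d α r l).Nonempty →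
      (1 + ‖intVec k‖) ^ γ ≤ C * (1 + ‖intVec l‖) ^ γ := by
  have ht : 0 ≤ α / (1 - α) := div_nonneg hα0 (by linarith)
  refine ⟨(1 + 2 * r) ^ |γ|, Real.one_le_rpow (by linarith) (abs_nonneg γ),
    fun k l _ _ hkl => ?_⟩
  have hk : ‖intVec k‖ ≤ ‖intVec l‖ + 2 * r :=
    norm_le_norm_add_two_mul_of_ball_inter_ball_nonempty ht hkl
  have hl : ‖intVec l‖ ≤ ‖intVec k‖ + 2 * r :=
    norm_le_norm_add_two_mul_of_ball_inter_ball_nonempty ht (Set.inter_comm _ _ ▸ hkl)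
  exact rpow_le_rpow_abs_mul_rpow_of_le_mul (by positivity) (by positivity) (by positivity)
    (one_add_le_mul_one_add_of_le_add (norm_nonneg _) (by positivity) hk)
    (one_add_le_mul_one_add_of_le_add (norm_nonneg _) (by positivity) hl) γ

/-- For `d ≥ 1`, `α ∈ [0,1)`, `r > 0` and `γ ∈ ℝ`, the weight
`w^{(γ)}_k = (1 + |k|)^γ` is moderate with respect to the covering `(B_k^r)_{k ∈ ℤ^d∖{0}}`:
there is `C ≥ 1` with `(1+|k|)^γ ≤ C (1+|l|)^γ` whenever `B_k^r ∩ B_l^r ≠ ∅`. -/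
theorem alpha_covering_weight_moderate
    {d : ℕ} (hd : 1 ≤ d) (α : ℝ) (hα0 : 0 ≤ α) (hα1 : α < 1) (r : ℝ) (hr : 0 < r) (γ : ℝ) :
    ∃ C : ℝ, 1 ≤ C ∧ ∀ k l : Fin d → ℤ, k ≠ 0 → l ≠ 0 →
      (alphaBall d α r k ∩ alphaBall d α r l).Nonempty →
      (1 + ‖intVec k‖) ^ γ ≤ C * (1 + ‖intVec l‖) ^ γ :=
  alpha_covering_weight_moderate_general α hα0 hα1 r hr γ
end

section
/- For every c ∈ ℝ, the shearlet-type set H₃^{(c)} = {ε·[[a, b],[0, a^c]] : a ∈ (0,∞), b ∈ ℝ, ε ∈ {1,−1}} is a closed subgroup of GL(2,ℝ), and it is an admissible dilation group: with ξ₀ = (1,0), the dual orbit {hᵀ ξ₀ : h ∈ H₃^{(c)}} equals (ℝ∖{0}) × ℝ, which is open in ℝ² and whose complement {0}×ℝ is a Lebesgue null set, and the stabilizer {h ∈ H₃^{(c)} : hᵀ ξ₀ = ξ₀} equals {I} and is in particular compact. -/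
/-! Writing `ε [[a, b], [0, a^c]]` for the elements, the product of two of them is
`ε₁ε₂ [[a₁a₂, a₁b₂ + b₁a₂^c], [0, (a₁a₂)^c]]`, so the set is closed under products, and choosing
`b₂` to kill the corner gives inverses. It is cut out of `GL(2,ℝ)` by the equations
`h₁₀ = 0` and `h₁₁ = h₀₀ |h₀₀|^(c-1)`; the second one is continuous on the closed set where the
first holds, because `h₀₀ ≠ 0` there, so the subgroup is closed. Finally `hᵀ (1,0) = (εa, εb)`,
which sweeps out exactly `{ξ | ξ₀ ≠ 0}` and equals `(1,0)` only for `ε = a = 1, b = 0`. -/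

open MeasureTheory Matrix

/-- The shearlet-type family `H₃^{(c)} = {ε [[a, b], [0, a^c]] : a > 0, b ∈ ℝ, ε = ±1}`,
as a set of elements of `GL(2,ℝ)`. -/
def shearletTypeSet (c : ℝ) : Set (GL (Fin 2) ℝ) :=
  {h | ∃ (a b ε : ℝ), 0 < a ∧ (ε = 1 ∨ ε = -1) ∧
    (h : Matrix (Fin 2) (Fin 2) ℝ) = ε • !![a, b; 0, a ^ c]}

theorem exists_eq_pm_one_mul_abs (x : ℝ) : ∃ ε : ℝ, (ε = 1 ∨ ε = -1) ∧ x = ε * |x| := by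
  rcases le_total 0 x with hx | hx
  · exact ⟨1, Or.inl rfl, by rw [abs_of_nonneg hx, one_mul]⟩
  · exact ⟨-1, Or.inr rfl, by rw [abs_of_nonpos hx, neg_one_mul, neg_neg]⟩

theorem Matrix.GeneralLinearGroup.val_zero_zero_ne_zero_of_val_one_zero {K : Type*} [Field K]
    {h : GL (Fin 2) K}
    (h₁₀ : (h : Matrix (Fin 2) (Fin 2) K) 1 0 = 0) : (h : Matrix (Fin 2) (Fin 2) K) 0 0 ≠ 0 := by
  have hdet := h.det_ne_zero
  rw [det_fin_two, h₁₀, mul_zero, sub_zero] at hdet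
  exact left_ne_zero_of_mul hdet

noncomputable abbrev shearletMatrix (c ε a b : ℝ) : Matrix (Fin 2) (Fin 2) ℝ :=
  ε • !![a, b; 0, a ^ c]

theorem shearletMatrix_mul (c : ℝ) {a₁ a₂ : ℝ} (ha₁ : 0 ≤ a₁) (ha₂ : 0 ≤ a₂) (ε₁ ε₂ b₁ b₂ : ℝ) :
    shearletMatrix c ε₁ a₁ b₁ * shearletMatrix c ε₂ a₂ b₂ =
      shearletMatrix c (ε₁ * ε₂) (a₁ * a₂) (a₁ * b₂ + b₁ * a₂ ^ c) := by
  simp only [shearletMatrix, smul_mul_smul_comm, mul_fin_two, Real.mul_rpow ha₁ ha₂]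
  simp

theorem shearletMatrix_one (c : ℝ) : shearletMatrix c 1 1 0 = 1 := by
  rw [shearletMatrix, Real.one_rpow, one_smul, one_fin_two]

theorem shearletMatrix_transpose_mulVec (c ε a b : ℝ) :
    (shearletMatrix c ε a b)ᵀ *ᵥ ![1, 0] = ![ε * a, ε * b] := by
  ext i; fin_cases i <;> simp [mulVec, dotProduct]

theorem det_shearletMatrix (c ε a b : ℝ) :
    (shearletMatrix c ε a b).det = ε * ε * (a * a ^ c) := by
  rw [det_smul, det_fin_two_of, Fintype.card_fin]
  ring

theorem one_mem_shearletTypeSet (c : ℝ) : (1 : GL (Fin 2) ℝ) ∈ shearletTypeSet c :=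
  ⟨1, 0, 1, one_pos, Or.inl rfl, (shearletMatrix_one c).symm⟩

theorem mul_mem_shearletTypeSet {c : ℝ} {g h : GL (Fin 2) ℝ}
    (hg : g ∈ shearletTypeSet c) (hh : h ∈ shearletTypeSet c) : g * h ∈ shearletTypeSet c := by
  obtain ⟨a₁, b₁, ε₁, ha₁, hε₁, hg⟩ := hg
  obtain ⟨a₂, b₂, ε₂, ha₂, hε₂, hh⟩ := hh
  refine ⟨a₁ * a₂, a₁ * b₂ + b₁ * a₂ ^ c, ε₁ * ε₂, mul_pos ha₁ ha₂, ?_, ?_⟩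
  · rw [← mul_self_eq_one_iff] at hε₁ hε₂ ⊢
    rw [mul_mul_mul_comm, hε₁, hε₂, one_mul]
  · rw [Units.val_mul, hg, hh, shearletMatrix_mul c ha₁.le ha₂.le]

theorem inv_mem_shearletTypeSet {c : ℝ} {h : GL (Fin 2) ℝ} (hh : h ∈ shearletTypeSet c) :
    h⁻¹ ∈ shearletTypeSet c := by
  obtain ⟨a, b, ε, ha, hε, hh⟩ := hh
  refine ⟨a⁻¹, -(a⁻¹ * b / a ^ c), ε, inv_pos.mpr ha, hε, ?_⟩
  refine Units.inv_eq_of_mul_eq_one_left ?_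
  have hac : a ^ c ≠ 0 := (Real.rpow_pos_of_pos ha c).ne'
  rw [hh, shearletMatrix_mul c (inv_nonneg.mpr ha.le) ha.le, mul_self_eq_one_iff.mpr hε,
    inv_mul_cancel₀ ha.ne', neg_mul, div_mul_cancel₀ _ hac, add_neg_cancel,
    shearletMatrix_one]

def shearletTypeSubgroup (c : ℝ) : Subgroup (GL (Fin 2) ℝ) where
  carrier := shearletTypeSet c
  one_mem' := one_mem_shearletTypeSet c
  mul_mem' := mul_mem_shearletTypeSet
  inv_mem' := inv_mem_shearletTypeSet

theorem exists_eq_shearletMatrix {c : ℝ} {M : Matrix (Fin 2) (Fin 2) ℝ} (h₀₀ : M 0 0 ≠ 0)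
    (h₁₀ : M 1 0 = 0) (h₁₁ : M 1 1 = M 0 0 * |M 0 0| ^ (c - 1)) :
    ∃ a b ε : ℝ, 0 < a ∧ (ε = 1 ∨ ε = -1) ∧ M = shearletMatrix c ε a b := by
  obtain ⟨ε, hε, hM₀₀⟩ := exists_eq_pm_one_mul_abs (M 0 0)
  have hεε : ε * ε = 1 := mul_self_eq_one_iff.mpr hε
  have ha : |M 0 0| ≠ 0 := abs_ne_zero.mpr h₀₀
  refine ⟨|M 0 0|, ε * M 0 1, ε, abs_pos.mpr h₀₀, hε, ?_⟩
  ext i j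
  fin_cases i <;> fin_cases j <;> simp only [Fin.zero_eta, Fin.mk_one, smul_of, of_apply,
    cons_val_zero, cons_val_one, Pi.smul_apply, smul_eq_mul, mul_zero]
  · exact hM₀₀
  · rw [← mul_assoc, hεε, one_mul]
  · exact h₁₀
  · rw [h₁₁, Real.rpow_sub_one ha]
    nth_rw 1 [hM₀₀]
    field_simp

theorem mem_shearletTypeSet_iff {c : ℝ} {h : GL (Fin 2) ℝ} :
    h ∈ shearletTypeSet c ↔ (h : Matrix (Fin 2) (Fin 2) ℝ) 1 0 = 0 ∧
      (h : Matrix (Fin 2) (Fin 2) ℝ) 1 1 =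
        (h : Matrix (Fin 2) (Fin 2) ℝ) 0 0 * |(h : Matrix (Fin 2) (Fin 2) ℝ) 0 0| ^ (c - 1) := by
  constructor
  · rintro ⟨a, b, ε, ha, hε, hh⟩
    have hεa : |ε * a| = a := by rcases hε with rfl | rfl <;> simp [ha.le]
    simp only [hh, smul_of, of_apply, cons_val_zero, cons_val_one,
      Pi.smul_apply, smul_eq_mul, mul_zero, hεa, true_and, Real.rpow_sub_one ha.ne']
    field_simp
  · rintro ⟨h₁₀, h₁₁⟩
    exact exists_eq_shearletMatrix
      (GeneralLinearGroup.val_zero_zero_ne_zero_of_val_one_zero h₁₀) h₁₀ h₁₁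

theorem isClosed_shearletTypeSet (c : ℝ) : IsClosed (shearletTypeSet c) := by
  have hentry (i j : Fin 2) :
      Continuous fun h : GL (Fin 2) ℝ => (h : Matrix (Fin 2) (Fin 2) ℝ) i j :=
    Units.continuous_val.matrix_elem i j
  have hclosed : IsClosed {h : GL (Fin 2) ℝ | (h : Matrix (Fin 2) (Fin 2) ℝ) 1 0 = 0} :=
    isClosed_eq (hentry 1 0) continuous_const
  have hcont : ContinuousOn (fun h : GL (Fin 2) ℝ => ((h : Matrix (Fin 2) (Fin 2) ℝ) 1 1,
      (h : Matrix (Fin 2) (Fin 2) ℝ) 0 0 * |(h : Matrix (Fin 2) (Fin 2) ℝ) 0 0| ^ (c - 1)))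
      {h | (h : Matrix (Fin 2) (Fin 2) ℝ) 1 0 = 0} := fun h h₁₀ =>
    ((hentry 1 1).continuousAt.prodMk ((hentry 0 0).continuousAt.mul
      ((hentry 0 0).abs.continuousAt.rpow_const (Or.inl (abs_ne_zero.mpr
        (GeneralLinearGroup.val_zero_zero_ne_zero_of_val_one_zero h₁₀)))))).continuousWithinAt
  convert hcont.preimage_isClosed_of_isClosed hclosed isClosed_diagonal using 1
  ext h
  exact mem_shearletTypeSet_iff

theorem exists_mem_shearletTypeSet_val_eq (c : ℝ) {a ε : ℝ} (ha : 0 < a) (hε : ε = 1 ∨ ε = -1)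
    (b : ℝ) : ∃ h ∈ shearletTypeSet c, (h : Matrix (Fin 2) (Fin 2) ℝ) = shearletMatrix c ε a b := by
  have hdet : (shearletMatrix c ε a b).det ≠ 0 := by
    rw [det_shearletMatrix, mul_self_eq_one_iff.mpr hε, one_mul]
    positivity
  exact ⟨GeneralLinearGroup.mkOfDetNeZero _ hdet, ⟨a, b, ε, ha, hε, rfl⟩, rfl⟩

theorem dualOrbit_shearletTypeSet (c : ℝ) :
    {v : Fin 2 → ℝ | ∃ h ∈ shearletTypeSet c,
        v = ((h : Matrix (Fin 2) (Fin 2) ℝ)ᵀ).mulVec ![1, 0]} = {v | v 0 ≠ 0} := by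
  ext v
  constructor
  · rintro ⟨h, ⟨a, b, ε, ha, hε, hh⟩, rfl⟩
    have hε₀ : ε ≠ 0 := by rcases hε with rfl | rfl <;> norm_num
    simpa [hh, shearletMatrix_transpose_mulVec] using mul_ne_zero hε₀ ha.ne'
  · intro hv
    obtain ⟨ε, hε, hv₀⟩ := exists_eq_pm_one_mul_abs (v 0)
    obtain ⟨h, hmem, hh⟩ := exists_mem_shearletTypeSet_val_eq c (abs_pos.mpr hv) hε (ε * v 1)
    refine ⟨h, hmem, ?_⟩
    rw [hh, shearletMatrix_transpose_mulVec, ← mul_assoc, mul_self_eq_one_iff.mpr hε, one_mul,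
      ← hv₀]
    ext i
    fin_cases i <;> rfl

theorem stabilizer_shearletTypeSet (c : ℝ) :
    {h : GL (Fin 2) ℝ | h ∈ shearletTypeSet c ∧
        ((h : Matrix (Fin 2) (Fin 2) ℝ)ᵀ).mulVec ![1, 0] = ![1, 0]} = {1} := by
  ext h
  constructor
  · rintro ⟨⟨a, b, ε, ha, hε, hh⟩, hfix⟩
    rw [hh, shearletMatrix_transpose_mulVec] at hfix
    have hεa : ε * a = 1 := by simpa using congr_fun hfix 0
    have hεb : ε * b = 0 := by simpa using congr_fun hfix 1
    obtain rfl : ε = 1 := hε.resolve_right fun hε => by linarith [hε ▸ hεa]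
    rw [one_mul] at hεa hεb
    exact Units.ext (by rw [hh, hεa, hεb, Units.val_one]; exact shearletMatrix_one c)
  · rintro rfl
    exact ⟨one_mem_shearletTypeSet c, by simp⟩

theorem volume_setOf_apply_eq_zero {ι : Type*} [Fintype ι] (i : ι) :
    volume {v : ι → ℝ | v i = 0} = 0 := by
  let p : (ι → ℝ) →ₗ[ℝ] ℝ := LinearMap.proj i
  refine Measure.addHaar_submodule volume (LinearMap.ker p) fun htop => ?_
  have : (1 : ι → ℝ) ∈ LinearMap.ker p := htop ▸ Submodule.mem_top
  simp [p] at this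

/-- For every `c ∈ ℝ`, the shearlet-type set `H₃^{(c)}` is a closed subgroup
of `GL(2,ℝ)`, and it is an admissible dilation group: with `ξ₀ = (1,0)`, the dual orbit
`{hᵀ ξ₀ : h ∈ H₃^{(c)}}` equals `(ℝ∖{0}) × ℝ`, which is open with Lebesgue null complement
`{0} × ℝ`, and the stabilizer of `ξ₀` in `H₃^{(c)}` is `{I}`, in particular compact. -/
theorem shearlet_type_group_admissible_dilation_group (c : ℝ) :
    (∃ S : Subgroup (GL (Fin 2) ℝ),
      (S : Set (GL (Fin 2) ℝ)) = shearletTypeSet c ∧ IsClosed (S : Set (GL (Fin 2) ℝ))) ∧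
    ({v : Fin 2 → ℝ | ∃ h ∈ shearletTypeSet c,
        v = ((h : Matrix (Fin 2) (Fin 2) ℝ)ᵀ).mulVec ![1, 0]}
      = {v : Fin 2 → ℝ | v 0 ≠ 0}) ∧
    IsOpen {v : Fin 2 → ℝ | v 0 ≠ 0} ∧
    volume ({v : Fin 2 → ℝ | v 0 ≠ 0}ᶜ) = 0 ∧
    ({h : GL (Fin 2) ℝ | h ∈ shearletTypeSet c ∧
        ((h : Matrix (Fin 2) (Fin 2) ℝ)ᵀ).mulVec ![1, 0] = ![1, 0]}
      = {(1 : GL (Fin 2) ℝ)}) ∧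
    IsCompact {h : GL (Fin 2) ℝ | h ∈ shearletTypeSet c ∧
        ((h : Matrix (Fin 2) (Fin 2) ℝ)ᵀ).mulVec ![1, 0] = ![1, 0]} := by
  refine ⟨⟨shearletTypeSubgroup c, rfl, isClosed_shearletTypeSet c⟩, dualOrbit_shearletTypeSet c,
    isOpen_ne_fun (continuous_apply 0) continuous_const, ?_, stabilizer_shearletTypeSet c, ?_⟩
  · simpa only [Set.compl_ofPred, not_not] using volume_setOf_apply_eq_zero (0 : Fin 2)
  · rw [stabilizer_shearletTypeSet]
    exact isCompact_singleton
end
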